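/- arXiv:1707.07495 — 3 statements merged into one kernel-verified Lean document; each statement's English description precedes it below -/
import Mathlib

section
/- The energy functional can be rewritten as: E(u₁,u₂) = ∫(|∇u₁|²+|∇u₂|²) − (a*/2)∫(u₁²+u₂²)² + ∫V₁u₁² + ∫V₂u₂² + (1/2)∫(√(a*−a₁)u₁² − √(a*−a₂)u₂²)² + (β*−β)∫u₁²u₂², for any u₁, u₂ ∈ H¹(ℝ²)∩L⁴, where β* = a* + √((a*−a₁)(a*−a₂)) and 0 < a₁, a₂ ≤ a*. -/
open MeasureTheory Real Filter

noncomputable section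

abbrev E2 := EuclideanSpace ℝ (Fin 2)

/-! Each quartic integral in the identity is a linear combination of `∫ u₁⁴`, `∫ u₂⁴` and
`∫ u₁² u₂²`, the last finite because `u₁², u₂² ∈ L²`. With `sᵢ = √(a* - aᵢ)`, expanding
`(s₁ u₁² - s₂ u₂²)²` gives `(a* - a₁) u₁⁴ + (a* - a₂) u₂⁴ - 2 √((a* - a₁)(a* - a₂)) u₁² u₂²`,
and the two sides then agree coefficient by coefficient. -/

section QuarticIntegrals

variable {α : Type*} [MeasurableSpace α] {μ : Measure α} {f g : α → ℝ}

theorem aestronglyMeasurable_sq_of_integrable_pow_four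
    (hf : Integrable (fun x => f x ^ 4) μ) : AEStronglyMeasurable (fun x => f x ^ 2) μ := by
  have hsqrt := continuous_sqrt.comp_aestronglyMeasurable hf.aestronglyMeasurable
  convert hsqrt using 2 with x
  rw [show f x ^ 4 = (f x ^ 2) ^ 2 by ring, sqrt_sq (sq_nonneg _)]

theorem memLp_two_sq_of_integrable_pow_four
    (hf : Integrable (fun x => f x ^ 4) μ) : MemLp (fun x => f x ^ 2) 2 μ := by
  rw [memLp_two_iff_integrable_sq (aestronglyMeasurable_sq_of_integrable_pow_four hf)]
  simpa only [← pow_mul] using hf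

theorem integrable_sq_mul_sq_of_integrable_pow_four
    (hf : Integrable (fun x => f x ^ 4) μ) (hg : Integrable (fun x => g x ^ 4) μ) :
    Integrable (fun x => f x ^ 2 * g x ^ 2) μ :=
  (memLp_two_sq_of_integrable_pow_four hf).integrable_mul (memLp_two_sq_of_integrable_pow_four hg)

theorem integral_eq_quadratic_form_of_integrable_pow_four
    (hf : Integrable (fun x => f x ^ 4) μ) (hg : Integrable (fun x => g x ^ 4) μ)
    (p q r : ℝ) {Q : α → ℝ}
    (hQ : ∀ x, Q x = p * f x ^ 4 + q * g x ^ 4 + r * (f x ^ 2 * g x ^ 2)) :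
    ∫ x, Q x ∂μ = p * ∫ x, f x ^ 4 ∂μ + q * ∫ x, g x ^ 4 ∂μ
      + r * ∫ x, f x ^ 2 * g x ^ 2 ∂μ := by
  have hfg := integrable_sq_mul_sq_of_integrable_pow_four hf hg
  have hpq : Integrable (fun x => p * f x ^ 4 + q * g x ^ 4) μ :=
    (hf.const_mul p).add (hg.const_mul q)
  simp only [hQ]
  rw [integral_add hpq (hfg.const_mul r),
    integral_add (hf.const_mul p) (hg.const_mul q),
    integral_const_mul, integral_const_mul, integral_const_mul]

end QuarticIntegrals

theorem energy_rewriting_general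
    (astar a₁ a₂ β : ℝ)
    (ha₁' : a₁ ≤ astar)
    (ha₂' : a₂ ≤ astar)
    (βstar : ℝ)
    (hβstar : βstar = astar + Real.sqrt ((astar - a₁) * (astar - a₂)))
    (V₁ V₂ : E2 → ℝ) (u₁ u₂ : E2 → ℝ)
    (hu₁4 : Integrable (fun x => u₁ x ^ 4) (volume : Measure E2))
    (hu₂4 : Integrable (fun x => u₂ x ^ 4) (volume : Measure E2))
    (hV₁ : Integrable (fun x => V₁ x * u₁ x ^ 2) (volume : Measure E2))
    (hV₂ : Integrable (fun x => V₂ x * u₂ x ^ 2) (volume : Measure E2)) :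
    (∫ x, ‖fderiv ℝ u₁ x‖ ^ 2 + ‖fderiv ℝ u₂ x‖ ^ 2)
      + (∫ x, V₁ x * u₁ x ^ 2 + V₂ x * u₂ x ^ 2)
      - (∫ x, (a₁ / 2) * u₁ x ^ 4 + (a₂ / 2) * u₂ x ^ 4 + β * u₁ x ^ 2 * u₂ x ^ 2) =
    (∫ x, ‖fderiv ℝ u₁ x‖ ^ 2 + ‖fderiv ℝ u₂ x‖ ^ 2)
      - (astar / 2) * (∫ x, (u₁ x ^ 2 + u₂ x ^ 2) ^ 2)
      + (∫ x, V₁ x * u₁ x ^ 2)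
      + (∫ x, V₂ x * u₂ x ^ 2)
      + (1 / 2) * (∫ x, (Real.sqrt (astar - a₁) * u₁ x ^ 2
            - Real.sqrt (astar - a₂) * u₂ x ^ 2) ^ 2)
      + (βstar - β) * ∫ x, u₁ x ^ 2 * u₂ x ^ 2 := by
  set s₁ := √(astar - a₁)
  set s₂ := √(astar - a₂)
  have hs₁ : s₁ ^ 2 = astar - a₁ := sq_sqrt (sub_nonneg.2 ha₁')
  have hs₂ : s₂ ^ 2 = astar - a₂ := sq_sqrt (sub_nonneg.2 ha₂')
  have hs₁₂ : s₁ * s₂ = √((astar - a₁) * (astar - a₂)) := (sqrt_mul (sub_nonneg.2 ha₁') _).symm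
  have hnonlinear : ∫ x, (a₁ / 2) * u₁ x ^ 4 + (a₂ / 2) * u₂ x ^ 4 + β * u₁ x ^ 2 * u₂ x ^ 2 =
      _ := integral_eq_quadratic_form_of_integrable_pow_four hu₁4 hu₂4 (a₁ / 2) (a₂ / 2) β
        fun x => by ring
  have hdensity : ∫ x, (u₁ x ^ 2 + u₂ x ^ 2) ^ 2 = _ :=
    integral_eq_quadratic_form_of_integrable_pow_four hu₁4 hu₂4 1 1 2 fun x => by ring
  have hdefect : ∫ x, (s₁ * u₁ x ^ 2 - s₂ * u₂ x ^ 2) ^ 2 = _ :=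
    integral_eq_quadratic_form_of_integrable_pow_four hu₁4 hu₂4 (s₁ ^ 2) (s₂ ^ 2) (-2 * s₁ * s₂)
      fun x => by ring
  rw [integral_add hV₁ hV₂, hnonlinear, hdensity, hdefect, hβstar, ← hs₁₂]
  linear_combination (-(∫ x, u₁ x ^ 4) / 2) * hs₁ - ((∫ x, u₂ x ^ 4) / 2) * hs₂

/-- the rewriting (1.17) of the GP energy functional. -/
theorem energy_rewriting
    (astar a₁ a₂ β : ℝ)
    (ha₁ : 0 < a₁) (ha₁' : a₁ ≤ astar)
    (ha₂ : 0 < a₂) (ha₂' : a₂ ≤ astar)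
    (βstar : ℝ)
    (hβstar : βstar = astar + Real.sqrt ((astar - a₁) * (astar - a₂)))
    (V₁ V₂ : E2 → ℝ) (u₁ u₂ : E2 → ℝ)
    (hu₁4 : Integrable (fun x => u₁ x ^ 4) (volume : Measure E2))
    (hu₂4 : Integrable (fun x => u₂ x ^ 4) (volume : Measure E2))
    (hV₁ : Integrable (fun x => V₁ x * u₁ x ^ 2) (volume : Measure E2))
    (hV₂ : Integrable (fun x => V₂ x * u₂ x ^ 2) (volume : Measure E2))
    (hgrad : Integrable (fun x => ‖fderiv ℝ u₁ x‖ ^ 2 + ‖fderiv ℝ u₂ x‖ ^ 2)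
      (volume : Measure E2)) :
    (∫ x, ‖fderiv ℝ u₁ x‖ ^ 2 + ‖fderiv ℝ u₂ x‖ ^ 2)
      + (∫ x, V₁ x * u₁ x ^ 2 + V₂ x * u₂ x ^ 2)
      - (∫ x, (a₁ / 2) * u₁ x ^ 4 + (a₂ / 2) * u₂ x ^ 4 + β * u₁ x ^ 2 * u₂ x ^ 2) =
    (∫ x, ‖fderiv ℝ u₁ x‖ ^ 2 + ‖fderiv ℝ u₂ x‖ ^ 2)
      - (astar / 2) * (∫ x, (u₁ x ^ 2 + u₂ x ^ 2) ^ 2)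
      + (∫ x, V₁ x * u₁ x ^ 2)
      + (∫ x, V₂ x * u₂ x ^ 2)
      + (1 / 2) * (∫ x, (Real.sqrt (astar - a₁) * u₁ x ^ 2
            - Real.sqrt (astar - a₂) * u₂ x ^ 2) ^ 2)
      + (βstar - β) * ∫ x, u₁ x ^ 2 * u₂ x ^ 2 :=
  energy_rewriting_general astar a₁ a₂ β ha₁' ha₂' βstar hβstar V₁ V₂ u₁ u₂ hu₁4 hu₂4 hV₁ hV₂
end
end

section
/- For θ ∈ [0,1] and 0 < a₁, a₂ < a*, β ≤ β* = a* + √((a*−a₁)(a*−a₂)), one has a₁θ² + a₂(1−θ)² + 2βθ(1−θ) ≤ a*, with equality if and only if β = β* and θ = γ := √(a*−a₂)/(√(a*−a₁)+√(a*−a₂)). -/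
/-!
With `s = √(a* − a₁)` and `t = √(a* − a₂)`, writing `a* = a*(θ + (1 − θ))²` gives
`a* − Q(θ) = (sθ − t(1 − θ))² + 2(a* + st − β)θ(1 − θ)`, a sum of two nonnegative terms
when `β ≤ β* = a* + st` and `θ ∈ [0,1]`. The square vanishes exactly at `θ = γ = t/(s + t)`,
an interior point, so the second term then vanishes only if `β = β*`.
-/

namespace QuadraticFormBound

variable {a a₁ a₂ s t β θ : ℝ}

theorem sub_eq_sq_add_mul (hs : s ^ 2 = a - a₁) (ht : t ^ 2 = a - a₂) :
    a - (a₁ * θ ^ 2 + a₂ * (1 - θ) ^ 2 + 2 * β * θ * (1 - θ)) =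
      (s * θ - t * (1 - θ)) ^ 2 + 2 * (a + s * t - β) * (θ * (1 - θ)) := by
  linear_combination -θ ^ 2 * hs - (1 - θ) ^ 2 * ht

theorem mul_sub_mul_one_sub_eq_zero_iff (hst : s + t ≠ 0) :
    s * θ - t * (1 - θ) = 0 ↔ θ = t / (s + t) := by
  rw [eq_div_iff hst]
  constructor <;> intro h <;> linarith

theorem div_add_mul_one_sub_div_pos (hs : 0 < s) (ht : 0 < t) :
    0 < t / (s + t) * (1 - t / (s + t)) := by
  have hst : s + t ≠ 0 := by positivity
  have : 1 - t / (s + t) = s / (s + t) := by field_simp; ring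
  rw [this]
  positivity

theorem le_and_eq_iff_of_sq_eq (hs : 0 < s) (ht : 0 < t)
    (hs2 : s ^ 2 = a - a₁) (ht2 : t ^ 2 = a - a₂) (hβ : β ≤ a + s * t)
    (hθ : θ ∈ Set.Icc (0 : ℝ) 1) :
    a₁ * θ ^ 2 + a₂ * (1 - θ) ^ 2 + 2 * β * θ * (1 - θ) ≤ a ∧
    (a₁ * θ ^ 2 + a₂ * (1 - θ) ^ 2 + 2 * β * θ * (1 - θ) = a ↔
      β = a + s * t ∧ θ = t / (s + t)) := by
  have hsq : 0 ≤ (s * θ - t * (1 - θ)) ^ 2 := sq_nonneg _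
  have hcross : 0 ≤ 2 * (a + s * t - β) * (θ * (1 - θ)) :=
    mul_nonneg (by linarith) (mul_nonneg hθ.1 (by linarith [hθ.2]))
  have hid := sub_eq_sq_add_mul (θ := θ) (β := β) hs2 ht2
  refine ⟨by linarith, ?_⟩
  rw [← sub_eq_zero (b := a), ← neg_eq_zero, neg_sub, hid, add_eq_zero_iff_of_nonneg hsq hcross,
    pow_eq_zero_iff two_ne_zero, mul_sub_mul_one_sub_eq_zero_iff (by positivity)]
  constructor
  · rintro ⟨rfl, hcross0⟩
    have hpos := div_add_mul_one_sub_div_pos hs ht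
    refine ⟨?_, rfl⟩
    rcases mul_eq_zero.1 hcross0 with h | h
    · linarith
    · exact absurd h hpos.ne'
  · rintro ⟨rfl, rfl⟩
    exact ⟨rfl, by ring⟩

end QuadraticFormBound

theorem quadratic_form_le_astar_general
    (astar a₁ a₂ β : ℝ)
    (ha₁' : a₁ < astar)
    (ha₂' : a₂ < astar)
    (hβ : β ≤ astar + Real.sqrt ((astar - a₁) * (astar - a₂)))
    (θ : ℝ) (hθ : θ ∈ Set.Icc (0 : ℝ) 1) :
    a₁ * θ ^ 2 + a₂ * (1 - θ) ^ 2 + 2 * β * θ * (1 - θ) ≤ astar ∧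
    (a₁ * θ ^ 2 + a₂ * (1 - θ) ^ 2 + 2 * β * θ * (1 - θ) = astar ↔
      β = astar + Real.sqrt ((astar - a₁) * (astar - a₂)) ∧
      θ = Real.sqrt (astar - a₂) /
        (Real.sqrt (astar - a₁) + Real.sqrt (astar - a₂))) := by
  rw [Real.sqrt_mul (sub_nonneg.2 ha₁'.le)] at hβ ⊢
  exact QuadraticFormBound.le_and_eq_iff_of_sq_eq
    (Real.sqrt_pos.2 (sub_pos.2 ha₁')) (Real.sqrt_pos.2 (sub_pos.2 ha₂'))
    (Real.sq_sqrt (sub_nonneg.2 ha₁'.le)) (Real.sq_sqrt (sub_nonneg.2 ha₂'.le)) hβ hθ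

/-- for `θ ∈ [0,1]`, `a₁θ² + a₂(1−θ)² + 2βθ(1−θ) ≤ a*`, with equality
iff `β = β*` and `θ = γ`. -/
theorem quadratic_form_le_astar
    (astar a₁ a₂ β : ℝ)
    (ha₁ : 0 < a₁) (ha₁' : a₁ < astar)
    (ha₂ : 0 < a₂) (ha₂' : a₂ < astar)
    (hβ : β ≤ astar + Real.sqrt ((astar - a₁) * (astar - a₂)))
    (θ : ℝ) (hθ : θ ∈ Set.Icc (0 : ℝ) 1) :
    a₁ * θ ^ 2 + a₂ * (1 - θ) ^ 2 + 2 * β * θ * (1 - θ) ≤ astar ∧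
    (a₁ * θ ^ 2 + a₂ * (1 - θ) ^ 2 + 2 * β * θ * (1 - θ) = astar ↔
      β = astar + Real.sqrt ((astar - a₁) * (astar - a₂)) ∧
      θ = Real.sqrt (astar - a₂) /
        (Real.sqrt (astar - a₁) + Real.sqrt (astar - a₂))) :=
  quadratic_form_le_astar_general astar a₁ a₂ β ha₁' ha₂' hβ θ hθ
end

section
/- Let w be the unique positive solution of Δw − w + w³ = 0 in ℝ², a₁ ∈ (0, a*), γ ∈ (0,1). Suppose ξ ∈ H¹(ℝ²) solves Δξ − ξ + (1 + (2a₁/a*)γ)w²ξ = (2γ/a*) w ∫_{ℝ²} w³ξ in ℝ². Then ∫_{ℝ²} w³ ξ = 0, and consequently ξ solves Δξ − ξ + c w²ξ = 0 with c = 1 + (2a₁/a*)γ ∈ (1,3). -/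
/-!
Subtracting `ξ` times the equation for `w` from `w` times the equation for `ξ` gives
`w Δξ - ξ Δw = -(2a₁γ/a*) w³ξ + (2γ/a*) (∫ w³ξ) w²`. The left side is the divergence of
`w ∇ξ - ξ ∇w`, which is integrable since `w, ξ ∈ H¹`, so its integral vanishes, while the right side
integrates to `2γ (1 - a₁/a*) ∫ w³ξ`; as `a₁ < a*`, this forces `∫ w³ξ = 0`.

That an integrable divergence of an integrable `C¹` field has integral zero is seen by testing
against the cutoffs `x ↦ g (t • x)` of a fixed bump `g`: they tend to `1` pointwise as `t → 0`,
while their gradients are `O(t)`.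
-/

open MeasureTheory Real

noncomputable section

def lap (u : E2 → ℝ) (x : E2) : ℝ :=
  ∑ i : Fin 2, fderiv ℝ (fun y => fderiv ℝ u y (EuclideanSpace.single i 1)) x
    (EuclideanSpace.single i 1)

def H1 (u : E2 → ℝ) : Prop :=
  Differentiable ℝ u ∧ MemLp u 2 (volume : Measure E2) ∧
    MemLp (fun x => ‖fderiv ℝ u x‖) 2 (volume : Measure E2)

open Filter Topology MeasureTheory.Measure

section Divergence

variable {E : Type*} [NormedAddCommGroup E] [NormedSpace ℝ E] [MeasurableSpace E] {μ : Measure E}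

lemma tendsto_integral_comp_smul_mul [OpensMeasurableSpace E] {g : E → ℝ} (hg : Continuous g)
    {C : ℝ} (hgC : ∀ x, |g x| ≤ C) {h : E → ℝ} (hh : Integrable h μ) :
    Tendsto (fun t : ℝ => ∫ x, g (t • x) * h x ∂μ) (𝓝 0) (𝓝 (g 0 * ∫ x, h x ∂μ)) := by
  rw [← integral_const_mul]
  refine tendsto_integral_filter_of_dominated_convergence (fun x => C * ‖h x‖) ?_ ?_
    (hh.norm.const_mul C) ?_
  · exact .of_forall fun t =>
      ((hg.comp (continuous_const_smul t)).aestronglyMeasurable).mul hh.aestronglyMeasurable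
  · refine .of_forall fun t => .of_forall fun x => ?_
    rw [norm_mul]
    exact mul_le_mul_of_nonneg_right (hgC _) (norm_nonneg _)
  · refine .of_forall fun x => ?_
    have : Tendsto (fun t : ℝ => t • x) (𝓝 0) (𝓝 0) := by
      rw [← zero_smul ℝ x]
      exact tendsto_id.smul_const x
    exact ((hg.tendsto 0).comp this).mul_const _

lemma tendsto_integral_fderiv_comp_smul_mul {g : E → ℝ} {C : ℝ}
    (hgC : ∀ x, ‖fderiv ℝ g x‖ ≤ C) {F : E → ℝ} (hF : Integrable F μ) (v : E) :
    Tendsto (fun t : ℝ => ∫ x, fderiv ℝ (fun y => g (t • y)) x v * F x ∂μ) (𝓝 0) (𝓝 0) := by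
  have hbound : ∀ t : ℝ, ‖∫ x, fderiv ℝ (fun y => g (t • y)) x v * F x ∂μ‖ ≤
      |t| * (C * ‖v‖ * ∫ x, ‖F x‖ ∂μ) := by
    intro t
    calc ‖∫ x, fderiv ℝ (fun y => g (t • y)) x v * F x ∂μ‖
        ≤ ∫ x, |t| * (C * ‖v‖) * ‖F x‖ ∂μ := by
          refine norm_integral_le_of_norm_le (hF.norm.const_mul _) (.of_forall fun x => ?_)
          rw [fderiv_comp_smul, _root_.smul_apply, smul_eq_mul, norm_mul, norm_mul,
            Real.norm_eq_abs]
          gcongr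
          exact ((fderiv ℝ g _).le_opNorm v).trans (by gcongr; exact hgC _)
      _ = |t| * (C * ‖v‖ * ∫ x, ‖F x‖ ∂μ) := by rw [integral_const_mul]; ring
  refine squeeze_zero_norm hbound ?_
  simpa using (continuous_abs.tendsto (0:ℝ)).mul_const (C * ‖v‖ * ∫ x, ‖F x‖ ∂μ)

variable [FiniteDimensional ℝ E] [BorelSpace E] [IsAddHaarMeasure μ] {ι : Type*} [Fintype ι]

lemma integral_mul_sum_fderiv_eq_neg_sum_integral {φ : E → ℝ}
    (hφ : ContDiff ℝ 1 φ) (hφc : HasCompactSupport φ) {F : ι → E → ℝ}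
    (hF : ∀ i, ContDiff ℝ 1 (F i)) (v : ι → E) :
    ∫ x, φ x * ∑ i, fderiv ℝ (F i) x (v i) ∂μ =
      -∑ i, ∫ x, fderiv ℝ φ x (v i) * F i x ∂μ := by
  have hcont : ∀ {f : E → ℝ}, ContDiff ℝ 1 f → ∀ w : E, Continuous fun x => fderiv ℝ f x w :=
    fun hf w => (hf.continuous_fderiv one_ne_zero).clm_apply continuous_const
  have hint : ∀ i, Integrable (fun x => φ x * fderiv ℝ (F i) x (v i)) μ := fun i =>
    (hφ.continuous.mul (hcont (hF i) (v i))).integrable_of_hasCompactSupport hφc.mul_right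
  simp_rw [Finset.mul_sum, ← Finset.sum_neg_distrib]
  rw [integral_finsetSum _ fun i _ => hint i]
  refine Finset.sum_congr rfl fun i _ => ?_
  exact integral_mul_fderiv_eq_neg_fderiv_mul_of_integrable
    (((hcont hφ (v i)).mul (hF i).continuous).integrable_of_hasCompactSupport
      (hφc.fderiv_apply (𝕜 := ℝ) (v i)).mul_right)
    (hint i)
    ((hφ.continuous.mul (hF i).continuous).integrable_of_hasCompactSupport hφc.mul_right)
    (fun x _ => (hφ.differentiable one_ne_zero).differentiableAt)
    (fun x _ => ((hF i).differentiable one_ne_zero).differentiableAt)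

theorem integral_sum_fderiv_eq_zero_of_integrable {F : ι → E → ℝ}
    (hF : ∀ i, ContDiff ℝ 1 (F i)) (hFint : ∀ i, Integrable (F i) μ) (v : ι → E)
    (hdiv : Integrable (fun x => ∑ i, fderiv ℝ (F i) x (v i)) μ) :
    ∫ x, ∑ i, fderiv ℝ (F i) x (v i) ∂μ = 0 := by
  let g : ContDiffBump (0 : E) := ⟨1, 2, one_pos, one_lt_two⟩
  have hg : ContDiff ℝ 1 g := g.contDiff
  obtain ⟨C, hC⟩ := (hg.continuous_fderiv one_ne_zero).bounded_above_of_compact_support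
    (g.hasCompactSupport.fderiv (𝕜 := ℝ))
  have hlhs := tendsto_integral_comp_smul_mul (μ := μ) g.continuous
    (fun x => abs_le.2 ⟨by linarith [g.nonneg' x], g.le_one⟩) hdiv
  have hrhs : Tendsto (fun t : ℝ => -∑ i, ∫ x, fderiv ℝ (fun y => g (t • y)) x (v i) * F i x ∂μ)
      (𝓝 0) (𝓝 0) := by
    simpa using (tendsto_finsetSum Finset.univ fun i _ =>
      tendsto_integral_fderiv_comp_smul_mul (μ := μ) hC (hFint i) (v i)).neg
  rw [g.one_of_mem_closedBall (Metric.mem_closedBall_self zero_le_one), one_mul] at hlhs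
  refine tendsto_nhds_unique (hlhs.mono_left (nhdsWithin_le_nhds (s := {0}ᶜ))) ?_
  refine (hrhs.mono_left nhdsWithin_le_nhds).congr' ?_
  filter_upwards [self_mem_nhdsWithin] with t ht
  exact (integral_mul_sum_fderiv_eq_neg_sum_integral (hg.comp (contDiff_const_smul t))
    (g.hasCompactSupport.comp_smul ht) hF v).symm

end Divergence

lemma H1.memLp_fderiv_apply {u : E2 → ℝ} (hu : H1 u) (e : E2) :
    MemLp (fun x => fderiv ℝ u x e) 2 := by
  refine hu.2.2.of_le_mul (c := ‖e‖) (measurable_fderiv_apply_const ℝ u e).aestronglyMeasurable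
    (.of_forall fun x => ?_)
  rw [norm_norm, mul_comm]
  exact (fderiv ℝ u x).le_opNorm e

lemma mul_lap_sub_mul_lap_eq_sum_fderiv {u v : E2 → ℝ} (hu : ContDiff ℝ 2 u)
    (hv : ContDiff ℝ 2 v) (x : E2) :
    u x * lap v x - v x * lap u x =
      ∑ i : Fin 2, fderiv ℝ (fun y => u y * fderiv ℝ v y (EuclideanSpace.single i 1) -
        v y * fderiv ℝ u y (EuclideanSpace.single i 1)) x (EuclideanSpace.single i 1) := by
  have hD : ∀ {f : E2 → ℝ}, ContDiff ℝ 2 f → ∀ e : E2,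
      Differentiable ℝ fun y => fderiv ℝ f y e := fun hf e =>
    ((hf.fderiv_right (m := 1) le_rfl).clm_apply contDiff_const).differentiable one_ne_zero
  have hu1 := hu.differentiable two_ne_zero
  have hv1 := hv.differentiable two_ne_zero
  simp only [lap, Finset.mul_sum, ← Finset.sum_sub_distrib]
  refine Finset.sum_congr rfl fun i _ => ?_
  rw [(((hu1 x).hasFDerivAt.fun_mul (hD hv _ x).hasFDerivAt).fun_sub
    ((hv1 x).hasFDerivAt.fun_mul (hD hu _ x).hasFDerivAt)).fderiv]
  simp only [_root_.sub_apply, _root_.add_apply, _root_.smul_apply, smul_eq_mul]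
  ring

theorem integral_mul_lap_sub_mul_lap_eq_zero {u v : E2 → ℝ} (hu : ContDiff ℝ 2 u)
    (hv : ContDiff ℝ 2 v) (hu1 : H1 u) (hv1 : H1 v)
    (h : Integrable fun x => u x * lap v x - v x * lap u x) :
    ∫ x, u x * lap v x - v x * lap u x = 0 := by
  simp_rw [mul_lap_sub_mul_lap_eq_sum_fderiv hu hv] at h ⊢
  refine integral_sum_fderiv_eq_zero_of_integrable (fun i => ?_) (fun i => ?_) _ h
  · exact (hu.of_le one_le_two).mul ((hv.fderiv_right le_rfl).clm_apply contDiff_const) |>.sub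
      ((hv.of_le one_le_two).mul ((hu.fderiv_right le_rfl).clm_apply contDiff_const))
  · exact (hu1.2.1.integrable_mul (hv1.memLp_fderiv_apply _)).sub
      (hv1.2.1.integrable_mul (hu1.memLp_fderiv_apply _))

theorem nonlocal_linearized_orthogonality_general
    (w : E2 → ℝ)
    (hw_smooth : ContDiff ℝ 2 w)
    (hw_H1 : H1 w)
    (hw_eq : ∀ x, lap w x - w x + (w x) ^ 3 = 0)
    (astar : ℝ) (hastar : astar = ∫ x, w x ^ 2)
    (a₁ : ℝ) (ha₁ : 0 < a₁) (ha₁' : a₁ < astar)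
    (γ : ℝ) (hγ : γ ∈ Set.Ioo (0 : ℝ) 1)
    (ξ : E2 → ℝ) (hξ : H1 ξ) (hξ_smooth : ContDiff ℝ 2 ξ)
    (hξ_eq : ∀ x, lap ξ x - ξ x + (1 + (2 * a₁ / astar) * γ) * w x ^ 2 * ξ x =
      (2 * γ / astar) * w x * ∫ y, w y ^ 3 * ξ y) :
    (∫ y, w y ^ 3 * ξ y) = 0 ∧
    (∀ x, lap ξ x - ξ x + (1 + (2 * a₁ / astar) * γ) * w x ^ 2 * ξ x = 0) ∧
    1 < 1 + (2 * a₁ / astar) * γ ∧ 1 + (2 * a₁ / astar) * γ < 3 := by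
  have hastar_pos : 0 < astar := ha₁.trans ha₁'
  obtain ⟨hγ0, hγ1⟩ := hγ
  set I := ∫ y, w y ^ 3 * ξ y with hI_def
  have hI : I = 0 := by
    by_cases hInt : Integrable fun y => w y ^ 3 * ξ y
    swap
    · -- the junk value of a non-integrable integral is `0`
      exact integral_undef hInt
    have hw2 : Integrable fun x => w x ^ 2 := hw_H1.2.1.integrable_sq
    have hpt : (fun x => w x * lap ξ x - ξ x * lap w x) = fun x =>
        -(2 * a₁ / astar * γ) * (w x ^ 3 * ξ x) + 2 * γ / astar * I * w x ^ 2 := by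
      funext x
      linear_combination w x * hξ_eq x - ξ x * hw_eq x
    have hgreen := integral_mul_lap_sub_mul_lap_eq_zero hw_smooth hξ_smooth hw_H1 hξ
      (hpt ▸ (hInt.const_mul _).add (hw2.const_mul _))
    rw [hpt, integral_add (hInt.const_mul _) (hw2.const_mul _), integral_const_mul,
      integral_const_mul, ← hI_def, ← hastar] at hgreen
    have hfactor : I * (2 * γ * (1 - a₁ / astar)) = 0 := by
      rw [← hgreen]; field_simp; ring
    have hcoef : 0 < 2 * γ * (1 - a₁ / astar) := by
      have : a₁ / astar < 1 := (div_lt_one hastar_pos).2 ha₁'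
      nlinarith
    exact (mul_eq_zero.1 hfactor).resolve_right hcoef.ne'
  have hc : 0 < 2 * a₁ / astar := by positivity
  have hc' : 2 * a₁ / astar < 2 := (div_lt_iff₀ hastar_pos).2 (by linarith)
  refine ⟨hI, fun x => by simpa [hI] using hξ_eq x, by nlinarith, by nlinarith⟩

/-- if `ξ ∈ H¹` solves the nonlocal linearized equation, then
`∫ w³ξ = 0`, so `ξ` solves `Δξ − ξ + c w²ξ = 0` with `c = 1 + (2a₁/a*)γ ∈ (1,3)`. -/
theorem nonlocal_linearized_orthogonality
    (w : E2 → ℝ)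
    (hw_smooth : ContDiff ℝ 2 w)
    (hw_pos : ∀ x, 0 < w x)
    (hw_H1 : H1 w)
    (hw_eq : ∀ x, lap w x - w x + (w x) ^ 3 = 0)
    (astar : ℝ) (hastar : astar = ∫ x, w x ^ 2)
    (a₁ : ℝ) (ha₁ : 0 < a₁) (ha₁' : a₁ < astar)
    (γ : ℝ) (hγ : γ ∈ Set.Ioo (0 : ℝ) 1)
    (ξ : E2 → ℝ) (hξ : H1 ξ) (hξ_smooth : ContDiff ℝ 2 ξ)
    (hξ_eq : ∀ x, lap ξ x - ξ x + (1 + (2 * a₁ / astar) * γ) * w x ^ 2 * ξ x =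
      (2 * γ / astar) * w x * ∫ y, w y ^ 3 * ξ y) :
    (∫ y, w y ^ 3 * ξ y) = 0 ∧
    (∀ x, lap ξ x - ξ x + (1 + (2 * a₁ / astar) * γ) * w x ^ 2 * ξ x = 0) ∧
    1 < 1 + (2 * a₁ / astar) * γ ∧ 1 + (2 * a₁ / astar) * γ < 3 :=
  nonlocal_linearized_orthogonality_general w hw_smooth hw_H1 hw_eq astar hastar a₁ ha₁ ha₁' γ hγ ξ
    hξ hξ_smooth hξ_eq
end
end
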